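/- arXiv:math/0701850 — 3 statements merged into one kernel-verified Lean document; each statement's English description precedes it below -/
import Mathlib

section
/- Let q be a power of an odd prime and let b, c be nonzero elements of the finite field F_q such that b/c is NOT a square in F_q, and let d ∈ F_q be any nonsquare. Set γ = b³/c². Then the quadratic twist Y² = X³ + bd²X + cd³ of the curve Y² = X³ + bX + c is isomorphic over F_q to the Weierstrass curve Y² = X³ + γX + γ, i.e., there exists an admissible change of variables over F_q carrying the former to the latter. -/
/-!
Writing the twist as `Y² = X³ + AX + B` with `A = bd²`, `B = cd³`, the scaling `(X, Y) ↦ (u²X, u³Y)`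
divides `A` by `u⁴` and `B` by `u⁶`; it lands on `γ = A³/B² = b³/c²` in both coefficients exactly
when `u² = B/A = d / (b/c)`. Such a `u` exists because the quotient of two nonsquares in a finite
field is a square.
-/

theorem FiniteField.isSquare_div_of_not_isSquare {F : Type*} [Field F] [Fintype F] {x y : F}
    (hx : ¬IsSquare x) (hy : ¬IsSquare y) : IsSquare (x / y) := by
  classical
  have hy0 : y ≠ 0 := by rintro rfl; exact hy IsSquare.zero
  have hxy0 : x / y ≠ 0 := div_ne_zero (by rintro rfl; exact hx IsSquare.zero) hy0
  rw [← quadraticChar_neg_one_iff_not_isSquare] at hx hy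
  rw [← quadraticChar_one_iff_isSquare hxy0]
  have hmul : quadraticChar F (x / y) * quadraticChar F y = quadraticChar F x := by
    rw [← map_mul, div_mul_cancel₀ x hy0]
  rw [hx, hy] at hmul
  linarith

namespace WeierstrassCurve

variable {R : Type*} [CommRing R]

abbrev shortWeierstrass (A B : R) : WeierstrassCurve R :=
  { a₁ := 0, a₂ := 0, a₃ := 0, a₄ := A, a₆ := B }

lemma scaling_smul_shortWeierstrass (u : Rˣ) (A B : R) :
    (⟨u, 0, 0, 0⟩ : VariableChange R) • shortWeierstrass A B =
      shortWeierstrass (u⁻¹ ^ 4 * A : R) (u⁻¹ ^ 6 * B) := by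
  ext <;> simp [variableChange_def]

theorem exists_variableChange_shortWeierstrass_eq_of_isSquare_div {K : Type*} [Field K]
    {A B : K} (hA : A ≠ 0) (hB : B ≠ 0) (hsq : IsSquare (B / A)) :
    ∃ C : VariableChange K,
      C • shortWeierstrass A B = shortWeierstrass (A ^ 3 / B ^ 2) (A ^ 3 / B ^ 2) := by
  obtain ⟨u, hu⟩ := hsq
  have hu0 : u ≠ 0 := by rintro rfl; exact div_ne_zero hB hA (by simpa using hu)
  have hu2 : u ^ 2 = B / A := by rw [hu, sq]
  refine ⟨⟨Units.mk0 u hu0, 0, 0, 0⟩, ?_⟩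
  rw [scaling_smul_shortWeierstrass, Units.val_inv_eq_inv_val, Units.val_mk0]
  congr 1
  · calc u⁻¹ ^ 4 * A = A / (u ^ 2) ^ 2 := by field_simp
      _ = A ^ 3 / B ^ 2 := by rw [hu2]; field_simp
  · calc u⁻¹ ^ 6 * B = B / (u ^ 2) ^ 3 := by field_simp
      _ = A ^ 3 / B ^ 2 := by rw [hu2]; field_simp

end WeierstrassCurve

theorem twist_iso_of_div_nonsq_general {F : Type*} [Field F] [Fintype F]
    (b c d : F)
    (hnsq : ¬ ∃ s : F, b / c = s ^ 2) (hd : ¬ ∃ s : F, d = s ^ 2) :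
    ∃ C : WeierstrassCurve.VariableChange F,
      C • ({ a₁ := 0, a₂ := 0, a₃ := 0, a₄ := b * d ^ 2, a₆ := c * d ^ 3 } :
            WeierstrassCurve F) =
        ({ a₁ := 0, a₂ := 0, a₃ := 0, a₄ := b ^ 3 / c ^ 2, a₆ := b ^ 3 / c ^ 2 } :
          WeierstrassCurve F) := by
  rw [← isSquare_iff_exists_sq] at hnsq hd
  have hbc : b / c ≠ 0 := by intro h; exact hnsq (h ▸ IsSquare.zero)
  have hd0 : d ≠ 0 := by rintro rfl; exact hd IsSquare.zero
  obtain ⟨hb, hc⟩ := div_ne_zero_iff.mp hbc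
  have hsq : IsSquare (c * d ^ 3 / (b * d ^ 2)) := by
    convert FiniteField.isSquare_div_of_not_isSquare hd hnsq using 1
    field_simp
  have hγ : (b * d ^ 2) ^ 3 / (c * d ^ 3) ^ 2 = b ^ 3 / c ^ 2 := by field_simp
  rw [← hγ]
  exact WeierstrassCurve.exists_variableChange_shortWeierstrass_eq_of_isSquare_div
    (mul_ne_zero hb (pow_ne_zero 2 hd0)) (mul_ne_zero hc (pow_ne_zero 3 hd0)) hsq

/-- Over a finite field `F` of odd characteristic `p`, if `b, c ∈ F` are nonzero,
`b / c` is not a square in `F`, and `d ∈ F` is any nonsquare, then the quadratic twist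
`Y² = X³ + bd²X + cd³` of `Y² = X³ + bX + c` is isomorphic over `F` (via an admissible change of
variables) to the Weierstrass curve `Y² = X³ + γX + γ` where `γ = b³ / c²`. -/
theorem twist_iso_of_div_nonsq {F : Type*} [Field F] [Fintype F]
    (p : ℕ) [Fact p.Prime] [CharP F p] (hp : p ≠ 2)
    (b c d : F) (hb : b ≠ 0) (hc : c ≠ 0)
    (hnsq : ¬ ∃ s : F, b / c = s ^ 2) (hd : ¬ ∃ s : F, d = s ^ 2) :
    ∃ C : WeierstrassCurve.VariableChange F,
      C • ({ a₁ := 0, a₂ := 0, a₃ := 0, a₄ := b * d ^ 2, a₆ := c * d ^ 3 } :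
            WeierstrassCurve F) =
        ({ a₁ := 0, a₂ := 0, a₃ := 0, a₄ := b ^ 3 / c ^ 2, a₆ := b ^ 3 / c ^ 2 } :
          WeierstrassCurve F) :=
  twist_iso_of_div_nonsq_general b c d hnsq hd
end

section
/- Let q = 2ⁿ, let F_q be the finite field with q elements, and let A, B ∈ F_q with Tr_{F_q/F_2}(A) = 1. Then the number of pairs (x, y) ∈ F_q × F_q with y² + xy = x³ + Ax² + Bx plus the number of pairs (x, y) ∈ F_q × F_q with y² + xy = x³ + Bx equals exactly 2q. -/
section Aux

variable {F : Type*} [Field F] [Fintype F]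

lemma aux_card_fiber_two (hF2 : (2:F) = 0) (c : F) (h : ∃ z : F, z^2 + z = c) :
    Nat.card {z : F // z^2 + z = c} = 2 := by
  obtain ⟨z₀, hz₀⟩ := h
  have hne : z₀ ≠ z₀ + 1 := by
    intro h; exact one_ne_zero (left_eq_add.mp h)
  have hset : {z : F | z^2 + z = c} = {z₀, z₀ + 1} := by
    ext z
    simp only [Set.mem_setOf_eq, Set.mem_insert_iff, Set.mem_singleton_iff]
    constructor
    · intro hz
      have hmul : (z - z₀) * (z - z₀ + 1) = 0 := by
        linear_combination hz - hz₀ + (z₀^2 - z*z₀) * hF2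
      rcases mul_eq_zero.mp hmul with h1 | h1
      · left; exact sub_eq_zero.mp h1
      · right; linear_combination h1 - hF2
    · rintro (rfl | rfl)
      · exact hz₀
      · linear_combination hz₀ + (z₀ + 1) * hF2
  have : Nat.card {z : F // z^2 + z = c} = ({z : F | z^2 + z = c} : Set F).ncard :=
    Nat.card_coe_set_eq _
  rw [this, hset, Set.ncard_pair hne]

lemma aux_pair (hF2 : (2:F) = 0) {A : F} (hA : ∀ w : F, w^2 + w ≠ A) (c : F) :
    Nat.card {z : F // z^2 + z = c + A} + Nat.card {z : F // z^2 + z = c} = 2 := by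
  classical
  set φ : F →+ F :=
    { toFun := fun z => z^2 + z
      map_zero' := by ring
      map_add' := by intro a b; linear_combination (a*b) * hF2 } with hφ
  have hφap : ∀ z : F, φ z = z^2 + z := fun z => rfl
  set R : AddSubgroup F := φ.range with hR
  have hAR : A ∉ R := by
    rintro ⟨w, hw⟩
    exact hA w hw
  have hker : Nat.card φ.ker = 2 := by
    have e : Nat.card φ.ker = Nat.card {z : F // z^2 + z = 0} :=
      Nat.card_congr (Equiv.subtypeEquivRight (fun z => by
        simp [AddMonoidHom.mem_ker, hφap]))
    rw [e, aux_card_fiber_two hF2 0 ⟨0, by ring⟩]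
  have hrange : Nat.card F = Nat.card R * 2 := by
    have h1 := AddSubgroup.card_eq_card_quotient_mul_card_addSubgroup φ.ker
    have h2 : Nat.card (F ⧸ φ.ker) = Nat.card R :=
      Nat.card_congr (QuotientAddGroup.quotientKerEquivRange φ).toEquiv
    rw [h2, hker] at h1
    exact h1
  have hquot : Nat.card (F ⧸ R) = 2 := by
    have h3 := AddSubgroup.card_eq_card_quotient_mul_card_addSubgroup R
    have hpos : 0 < Nat.card R := Nat.card_pos
    have : Nat.card (F ⧸ R) * Nat.card R = 2 * Nat.card R := by
      rw [← h3, hrange]; ring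
    exact Nat.eq_of_mul_eq_mul_right hpos this
  have key : ∀ d : F, d ∉ R → d + A ∈ R := by
    intro d hd
    by_contra hdA
    set a : F ⧸ R := QuotientAddGroup.mk d with ha
    set b : F ⧸ R := QuotientAddGroup.mk (d + A) with hb
    have h0a : a ≠ 0 := fun h => hd ((QuotientAddGroup.eq_zero_iff d).mp h)
    have h0b : b ≠ 0 := fun h => hdA ((QuotientAddGroup.eq_zero_iff (d+A)).mp h)
    have hmk : b = a + QuotientAddGroup.mk A := rfl
    have hab : a ≠ b := by
      intro h
      rw [hmk] at h
      exact hAR ((QuotientAddGroup.eq_zero_iff A).mp (left_eq_add.mp h))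
    haveI : Finite (F ⧸ R) := Quotient.finite _
    haveI : Fintype (F ⧸ R) := Fintype.ofFinite _
    have hcard : ({0, a, b} : Finset (F ⧸ R)).card ≤ Fintype.card (F ⧸ R) :=
      Finset.card_le_univ _
    have h3 : ({0, a, b} : Finset (F ⧸ R)).card = 3 := by
      rw [Finset.card_insert_of_notMem (by simp [h0a.symm, h0b.symm]),
        Finset.card_insert_of_notMem (by simp [hab]), Finset.card_singleton]
    rw [h3, ← Nat.card_eq_fintype_card, hquot] at hcard
    omega
  by_cases hc : c ∈ R
  · have hcA : c + A ∉ R := by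
      intro h
      have : A ∈ R := by
        have := R.sub_mem h hc
        simpa using this
      exact hAR this
    have hzero : Nat.card {z : F // z^2 + z = c + A} = 0 := by
      haveI : IsEmpty {z : F // z^2 + z = c + A} := ⟨fun z => hcA ⟨z.1, z.2⟩⟩
      exact Nat.card_of_isEmpty
    obtain ⟨w, hw⟩ := hc
    rw [hzero, aux_card_fiber_two hF2 c ⟨w, hw⟩]
  · have hzero : Nat.card {z : F // z^2 + z = c} = 0 := by
      haveI : IsEmpty {z : F // z^2 + z = c} := ⟨fun z => hc ⟨z.1, z.2⟩⟩
      exact Nat.card_of_isEmpty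
    obtain ⟨w, hw⟩ := key c hc
    rw [hzero, aux_card_fiber_two hF2 (c + A) ⟨w, hw⟩]

lemma aux_split (g : F → F) :
    Nat.card {xy : F × F // xy.2^2 + xy.1 * xy.2 = g xy.1} =
      ∑ x : F, Nat.card {y : F // y^2 + x * y = g x} := by
  classical
  have e := Equiv.subtypeProdEquivSigmaSubtype (fun (x y : F) => y^2 + x*y = g x)
  rw [Nat.card_congr e, Nat.card_eq_fintype_card, Fintype.card_sigma]
  simp [Nat.card_eq_fintype_card]

end Aux

/-- Let `F` be the finite field with `q = 2ⁿ` elements and `A, B ∈ F` with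
`Tr_{F/F₂}(A) = 1`. Then the number of affine solutions `(x, y) ∈ F²` of
`y² + xy = x³ + Ax² + Bx` plus the number of affine solutions of `y² + xy = x³ + Bx` is
exactly `2q`. -/
theorem card_solutions_add_card_twist_solutions {F : Type*} [Field F] [Fintype F]
    (n : ℕ) (hn : 1 ≤ n) (hq : Fintype.card F = 2 ^ n) [Algebra (ZMod 2) F]
    (A B : F) (hA : Algebra.trace (ZMod 2) F A = 1) :
    Nat.card {xy : F × F // xy.2 ^ 2 + xy.1 * xy.2 =
        xy.1 ^ 3 + A * xy.1 ^ 2 + B * xy.1} +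
      Nat.card {xy : F × F // xy.2 ^ 2 + xy.1 * xy.2 = xy.1 ^ 3 + B * xy.1} =
      2 * Fintype.card F := by
  classical
  haveI : CharP F 2 := charP_of_injective_algebraMap' (A := F) (ZMod 2) 2
  have hF2 : (2 : F) = 0 := by
    have := CharP.cast_eq_zero F 2
    exact_mod_cast this
  haveI : FiniteDimensional (ZMod 2) F := Module.Finite.of_finite
  -- trace and squaring
  have tr_sq : ∀ z : F, Algebra.trace (ZMod 2) F (z^2) = Algebra.trace (ZMod 2) F z := by
    intro z
    apply (algebraMap (ZMod 2) F).injective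
    haveI : ExpChar F 2 := ExpChar.prime Nat.prime_two
    calc algebraMap (ZMod 2) F (Algebra.trace (ZMod 2) F (z^2))
        = ∑ σ : F ≃ₐ[ZMod 2] F, σ (z^2) := trace_eq_sum_automorphisms _
      _ = ∑ σ : F ≃ₐ[ZMod 2] F, (σ z)^2 := by simp [map_pow]
      _ = (∑ σ : F ≃ₐ[ZMod 2] F, σ z)^2 := by rw [sum_pow_char]
      _ = (algebraMap (ZMod 2) F (Algebra.trace (ZMod 2) F z))^2 := by
          rw [trace_eq_sum_automorphisms]
      _ = algebraMap (ZMod 2) F ((Algebra.trace (ZMod 2) F z)^2) := by rw [map_pow]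
      _ = algebraMap (ZMod 2) F (Algebra.trace (ZMod 2) F z) := by
          congr 1
          have : ∀ t : ZMod 2, t^2 = t := by decide
          exact this _
  have hAnosol : ∀ w : F, w^2 + w ≠ A := by
    intro w hw
    have : Algebra.trace (ZMod 2) F A = 0 := by
      rw [← hw, map_add, tr_sq]
      have : ∀ t : ZMod 2, t + t = 0 := by decide
      exact this _
    rw [hA] at this
    exact one_ne_zero this
  rw [aux_split (fun x => x^3 + A*x^2 + B*x), aux_split (fun x => x^3 + B*x),
    ← Finset.sum_add_distrib]
  have hterm : ∀ x : F,
      Nat.card {y : F // y^2 + x*y = x^3 + A*x^2 + B*x} +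
        Nat.card {y : F // y^2 + x*y = x^3 + B*x} = 2 := by
    intro x
    by_cases hx : x = 0
    · subst hx
      have key : ∀ (r : F), r = 0 → Nat.card {y : F // y^2 + 0*y = r} = 1 := by
        intro r hr
        subst hr
        have hset : {y : F | y^2 + 0*y = 0} = {0} := by
          ext y
          simp [pow_eq_zero_iff]
        have : Nat.card {y : F // y^2 + 0*y = 0} = ({y : F | y^2 + 0*y = 0} : Set F).ncard :=
          Nat.card_coe_set_eq _
        rw [this, hset, Set.ncard_singleton]
      rw [key _ (by ring), key _ (by ring)]
    · have hx2 : x^2 ≠ 0 := pow_ne_zero _ hx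
      set c : F := (x^3 + B*x) / x^2 with hc
      have hiff : ∀ (z r : F), (z*x)^2 + x*(z*x) = r ↔ z^2 + z = r / x^2 := by
        intro z r
        rw [eq_div_iff hx2]
        constructor
        · intro H; linear_combination H
        · intro H; linear_combination H
      have hcA' : c + A = (x^3 + A*x^2 + B*x) / x^2 := by
        rw [hc]; field_simp; ring
      have e1 : Nat.card {y : F // y^2 + x*y = x^3 + A*x^2 + B*x} =
          Nat.card {z : F // z^2 + z = c + A} := by
        refine Nat.card_congr (Equiv.subtypeEquiv (Equiv.mulRight₀ x hx) ?_).symm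
        intro z
        simp only [Equiv.mulRight₀_apply]
        rw [hiff z (x^3 + A*x^2 + B*x), hcA']
      have e2 : Nat.card {y : F // y^2 + x*y = x^3 + B*x} =
          Nat.card {z : F // z^2 + z = c} := by
        refine Nat.card_congr (Equiv.subtypeEquiv (Equiv.mulRight₀ x hx) ?_).symm
        intro z
        simp only [Equiv.mulRight₀_apply]
        rw [hiff z (x^3 + B*x), hc]
      rw [e1, e2]
      exact aux_pair hF2 hAnosol c
  calc (∑ x : F, (Nat.card {y : F // y^2 + x*y = x^3 + A*x^2 + B*x} +
        Nat.card {y : F // y^2 + x*y = x^3 + B*x}))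
      = ∑ _x : F, 2 := Finset.sum_congr rfl (fun x _ => hterm x)
    _ = 2 * Fintype.card F := by
        rw [Finset.sum_const, Finset.card_univ, smul_eq_mul, mul_comm]
end

section
/- Let K be a field, λ, μ ∈ K nonzero, and k ≥ 1 an integer. Set q := λμ and t := λ + μ. Then the resultant with respect to X of the two polynomials qX² − tX + 1 and X^k − T, regarded as polynomials in X with coefficients in the polynomial ring K[T], equals q^k T² − (λ^k + μ^k) T + 1 in K[T]. -/
/-!
`sylvesterMatrix f g m n` is Mathlib's `Polynomial.sylvester` transposed, with the order of its
rows and of its columns reversed, so the two resultants agree. Over `K[T]` the polynomial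
`qX² - tX + 1` factors as `(λX - 1)(μX - 1)`, the resultant is multiplicative in its first
argument, and for a unit `a` we have `aX - 1 = a (X - a⁻¹)`, whence
`Res(aX - 1, X^k - T) = a^k (a⁻ᵏ - T) = 1 - a^k T`. Multiplying the two factors gives the claim.
-/

open Polynomial

/-- The Sylvester matrix of two polynomials `f`, `g` over a commutative ring, with respect to
the degree bounds `m` for `f` and `n` for `g`: its first `n` rows are the shifted coefficient
vectors of `f` and its last `m` rows are the shifted coefficient vectors of `g`. -/
noncomputable def sylvesterMatrix {R : Type*} [CommRing R] (f g : Polynomial R) (m n : ℕ) :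
    Matrix (Fin (n + m)) (Fin (n + m)) R :=
  Matrix.of fun i j =>
    if (i : ℕ) < n then
      if (i : ℕ) ≤ (j : ℕ) ∧ (j : ℕ) ≤ (i : ℕ) + m then f.coeff (m + i - j) else 0
    else
      if (i : ℕ) - n ≤ (j : ℕ) ∧ (j : ℕ) ≤ ((i : ℕ) - n) + n then
        g.coeff (n + ((i : ℕ) - n) - j) else 0

/-- The resultant of two polynomials `f`, `g` over a commutative ring: the determinant of their
Sylvester matrix (taken with respect to their natural degrees). -/
noncomputable def Polynomial.sylvesterResultant {R : Type*} [CommRing R] (f g : Polynomial R) : R :=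
  (sylvesterMatrix f g f.natDegree g.natDegree).det

open scoped Matrix

namespace Polynomial

variable {R : Type*} [CommRing R]

theorem sylvesterMatrix_eq_sylvester_transpose_submatrix (f g : R[X]) (m n : ℕ) :
    sylvesterMatrix f g m n = (sylvester f g m n)ᵀ.submatrix
      ((finCongr (add_comm n m)).trans Fin.revPerm)
      ((finCongr (add_comm n m)).trans Fin.revPerm) := by
  ext i j
  simp only [sylvesterMatrix, Matrix.submatrix_apply, Matrix.transpose_apply, Equiv.trans_apply,
    finCongr_apply, Fin.revPerm_apply, sylvester, Matrix.of_apply]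
  by_cases hi : (i : ℕ) < n
  · have : (Fin.cast (add_comm n m) i).rev = Fin.natAdd m ⟨n - 1 - i, by omega⟩ :=
      Fin.ext (by simp; omega)
    rw [this, Fin.addCases_right, if_pos hi]
    simp only [Fin.val_rev, Fin.val_cast, Set.mem_Icc]
    split_ifs <;> first | rfl | omega | congr 1; omega
  · have : (Fin.cast (add_comm n m) i).rev = Fin.castAdd n ⟨n + m - 1 - i, by omega⟩ :=
      Fin.ext (by simp; omega)
    rw [this, Fin.addCases_left, if_neg hi]
    simp only [Fin.val_rev, Fin.val_cast, Set.mem_Icc]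
    split_ifs <;> first | rfl | omega | congr 1; omega

theorem det_sylvesterMatrix (f g : R[X]) (m n : ℕ) :
    (sylvesterMatrix f g m n).det = f.resultant g m n := by
  rw [sylvesterMatrix_eq_sylvester_transpose_submatrix, Matrix.det_submatrix_equiv_self,
    Matrix.det_transpose, resultant]

theorem sylvesterResultant_eq_resultant (f g : R[X]) : f.sylvesterResultant g = f.resultant g :=
  det_sylvesterMatrix f g _ _

theorem resultant_C_mul_X_sub_one_left {a b : R} (hab : a * b = 1) {g : R[X]} {n : ℕ}
    (hg : g.natDegree ≤ n) : (C a * X - 1).resultant g 1 n = a ^ n * g.eval b := by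
  have : C a * X - 1 = C a * (X - C b) := by
    rw [mul_sub, ← C_mul, hab, C_1]
  rw [this, resultant_C_mul_left, resultant_X_sub_C_left _ _ _ hg]

theorem resultant_C_mul_X_sub_one_X_pow_sub_C {a b : R} (hab : a * b = 1) (n : ℕ) (c : R) :
    (C a * X - 1).resultant (X ^ n - C c) 1 n = 1 - a ^ n * c := by
  rw [resultant_C_mul_X_sub_one_left hab (natDegree_sub_C.trans_le (natDegree_X_pow_le n))]
  simp only [eval_sub, eval_pow, eval_X, eval_C]
  rw [mul_sub, ← mul_pow, hab, one_pow]

end Polynomial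

theorem resultant_zeta_extension_general {K : Type*} [Field K] (l μ : K) (hl : l ≠ 0) (hμ : μ ≠ 0)
    (k : ℕ) (q t : K) (hq : q = l * μ) (ht : t = l + μ) :
    Polynomial.sylvesterResultant
        (C (C q) * X ^ 2 - C (C t) * X + 1 : Polynomial (Polynomial K))
        (X ^ k - C X : Polynomial (Polynomial K)) =
      C (q ^ k) * X ^ 2 - C (l ^ k + μ ^ k) * X + 1 := by
  subst hq ht
  have hfactor : (C (C (l * μ)) * X ^ 2 - C (C (l + μ)) * X + 1 : K[X][X]) =
      (C (C l) * X - 1) * (C (C μ) * X - 1) := by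
    simp only [map_mul, map_add]; ring
  have hdeg {a : K} (ha : a ≠ 0) : (C (C a) * X - 1 : K[X][X]).natDegree = 1 := by
    rw [← C_1, natDegree_sub_C, natDegree_C_mul_X _ (C_ne_zero.2 ha)]
  have hne {a : K} (ha : a ≠ 0) : (C (C a) * X - 1 : K[X][X]) ≠ 0 :=
    ne_zero_of_natDegree_gt (n := 0) (by rw [hdeg ha]; exact one_pos)
  have hinv {a : K} (ha : a ≠ 0) : C a * C a⁻¹ = 1 := by
    rw [← C_mul, mul_inv_cancel₀ ha, C_1]
  rw [sylvesterResultant_eq_resultant, hfactor, resultant, natDegree_mul (hne hl) (hne hμ),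
    ← resultant, resultant_mul_left _ _ _ _ le_rfl, hdeg hl, hdeg hμ, natDegree_X_pow_sub_C,
    resultant_C_mul_X_sub_one_X_pow_sub_C (hinv hl),
    resultant_C_mul_X_sub_one_X_pow_sub_C (hinv hμ)]
  simp only [map_pow, map_mul, map_add]; ring

/-- Let `K` be a field, `λ, μ ∈ K` nonzero, `k ≥ 1`, `q = λμ`, `t = λ + μ`.
Then the resultant in `X` of `qX² − tX + 1` and `X^k − T`, as polynomials in `X` over `K[T]`,
equals `q^k T² − (λ^k + μ^k) T + 1` in `K[T]`. -/
theorem resultant_zeta_extension {K : Type*} [Field K] (l μ : K) (hl : l ≠ 0) (hμ : μ ≠ 0)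
    (k : ℕ) (hk : 1 ≤ k) (q t : K) (hq : q = l * μ) (ht : t = l + μ) :
    Polynomial.sylvesterResultant
        (C (C q) * X ^ 2 - C (C t) * X + 1 : Polynomial (Polynomial K))
        (X ^ k - C X : Polynomial (Polynomial K)) =
      C (q ^ k) * X ^ 2 - C (l ^ k + μ ^ k) * X + 1 :=
  resultant_zeta_extension_general l μ hl hμ k q t hq ht
end
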